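/- Let K be the field of fractions of ℚ[x₀,x₁,x₂,x₃,x₄,x₅] and let τ'₁, τ'₂, τ'₃ be the maps on K⁶ defined by: τ'₁ replaces (v₀,v₁) by ((v₂v₄+v₃v₅)/v₁, (v₂v₄+v₃v₅)/v₀); τ'₂ replaces (v₂,v₃) by ((v₁v₄+v₀v₅)/v₃, (v₁v₄+v₀v₅)/v₂); τ'₃ replaces (v₄,v₅) by ((v₀v₂+v₁v₃)/v₅, (v₀v₂+v₁v₃)/v₄); each fixes the remaining entries. Let X = (x₀,…,x₅). Then for all natural numbers s, t with (s,t) ≠ (0,0), the tuple obtained by applying, in left-to-right order, the word consisting of the block (1,2,3) repeated 2t times followed by the block (2,1,3) repeated 2s times to X is not equal to X. -/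

import Mathlib

noncomputable section

/-- The polynomial ring ℚ[x₀,…,x₅]. -/
abbrev P : Type := MvPolynomial (Fin 6) ℚ

/-- K = Frac(ℚ[x₀,…,x₅]). -/
abbrev K : Type := FractionRing P

/-- The images of the variables x₀,…,x₅ in K. -/
def x (i : Fin 6) : K := algebraMap P K (MvPolynomial.X i)

/-- τ'₁ : replaces (v₀, v₁) by ((v₂v₄+v₃v₅)/v₁, (v₂v₄+v₃v₅)/v₀). -/
def tau1 (v : Fin 6 → K) : Fin 6 → K := fun k =>
  if k = 0 then (v 2 * v 4 + v 3 * v 5) / v 1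
  else if k = 1 then (v 2 * v 4 + v 3 * v 5) / v 0
  else v k

/-- τ'₂ : replaces (v₂, v₃) by ((v₁v₄+v₀v₅)/v₃, (v₁v₄+v₀v₅)/v₂). -/
def tau2 (v : Fin 6 → K) : Fin 6 → K := fun k =>
  if k = 2 then (v 1 * v 4 + v 0 * v 5) / v 3
  else if k = 3 then (v 1 * v 4 + v 0 * v 5) / v 2
  else v k

/-- τ'₃ : replaces (v₄, v₅) by ((v₀v₂+v₁v₃)/v₅, (v₀v₂+v₁v₃)/v₄). -/
def tau3 (v : Fin 6 → K) : Fin 6 → K := fun k =>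
  if k = 4 then (v 0 * v 2 + v 1 * v 3) / v 5
  else if k = 5 then (v 0 * v 2 + v 1 * v 3) / v 4
  else v k

/-- τ' indexed by Fin 3: `tau i` is τ'_{i+1}. -/
def tau : Fin 3 → (Fin 6 → K) → (Fin 6 → K)
  | 0 => tau1
  | 1 => tau2
  | 2 => tau3

/-- The initial labeled seed X = (x₀,…,x₅). -/
def X0 : Fin 6 → K := x

/-- Apply the maps τ'₍a₁₎, …, τ'₍aₙ₎ along the word `w` in left-to-right order. -/
def applyWord (w : List (Fin 3)) (v : Fin 6 → K) : Fin 6 → K :=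
  w.foldl (fun u a => tau a u) v

/-- A = (x₂x₄+x₃x₅)/(x₀x₁). -/
def A : K := (x 2 * x 4 + x 3 * x 5) / (x 0 * x 1)

/-- B = (x₁x₄+x₀x₅)/(x₂x₃). -/
def B : K := (x 1 * x 4 + x 0 * x 5) / (x 2 * x 3)

/-- C = (x₀x₂+x₁x₃)/(x₄x₅). -/
def C : K := (x 0 * x 2 + x 1 * x 3) / (x 4 * x 5)

/-- The canonical path (123)^{2t}(213)^{2s} to the even alcove (3s, 3t)
(letters 1,2,3 are encoded as 0,1,2 in `Fin 3`). -/
def word17 (s t : ℕ) : List (Fin 3) :=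
  (List.replicate (2 * t) ([0, 1, 2] : List (Fin 3))).flatten ++
    (List.replicate (2 * s) ([1, 0, 2] : List (Fin 3))).flatten


/-! The seed is followed through its y-variables `ySeed v = (A(v), B(v), C(v))`, the exchange
ratios at the three antipodal pairs. Each τ'ₖ acts on them by the Y-mutation
`y_k ↦ y_k⁻¹, y_j ↦ y_k y_j (j ≠ k)`, which preserves `p = y₀ y₁ y₂`. Two blocks `123` multiply
`y` by `(p³, 1, p⁻³)` and two blocks `213` by `(1, p³, p⁻³)`, so the seed at the alcove `(3s, 3t)`
has y-variables `(A p^{3t}, B p^{3s}, C p^{-3(s+t)})` with `p = ABC`. A seed equal to the initial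
one would force `p^{3t} = p^{3s} = 1`, which is impossible since `ABC` specializes to `8` at
`x = (1, …, 1)`. -/

section YPattern

variable {F : Type*} [Field F]

def mutY (k : Fin 3) (y : Fin 3 → F) : Fin 3 → F :=
  fun j => if j = k then (y k)⁻¹ else y k * y j

def mutYWord (w : List (Fin 3)) (y : Fin 3 → F) : Fin 3 → F :=
  w.foldl (fun y k => mutY k y) y

theorem mutY_ne_zero {y : Fin 3 → F} (hy : ∀ j, y j ≠ 0) (k j : Fin 3) : mutY k y j ≠ 0 := by
  unfold mutY; split_ifs <;> simp [hy]

theorem mutYWord_append (w₁ w₂ : List (Fin 3)) (y : Fin 3 → F) :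
    mutYWord (w₁ ++ w₂) y = mutYWord w₂ (mutYWord w₁ y) :=
  List.foldl_append

theorem mutYWord_ne_zero {y : Fin 3 → F} (hy : ∀ j, y j ≠ 0) (w : List (Fin 3)) (j : Fin 3) :
    mutYWord w y j ≠ 0 := by
  induction w generalizing y with
  | nil => exact hy j
  | cons k w ih => exact ih (mutY_ne_zero hy k)

theorem mutYWord_123_123 {y : Fin 3 → F} (hy : ∀ j, y j ≠ 0) :
    mutYWord [0, 1, 2, 0, 1, 2] y = ![y 0 * (∏ j, y j) ^ 3, y 1, y 2 / (∏ j, y j) ^ 3] := by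
  have := hy 0; have := hy 1; have := hy 2
  funext j; fin_cases j <;> simp [mutYWord, mutY, Fin.prod_univ_three] <;> field_simp

theorem mutYWord_213_213 {y : Fin 3 → F} (hy : ∀ j, y j ≠ 0) :
    mutYWord [1, 0, 2, 1, 0, 2] y = ![y 0, y 1 * (∏ j, y j) ^ 3, y 2 / (∏ j, y j) ^ 3] := by
  have := hy 0; have := hy 1; have := hy 2
  funext j; fin_cases j <;> simp [mutYWord, mutY, Fin.prod_univ_three] <;> field_simp

theorem prod_mutY {y : Fin 3 → F} (hy : ∀ j, y j ≠ 0) (k : Fin 3) :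
    ∏ j, mutY k y j = ∏ j, y j := by
  have := hy k
  fin_cases k <;> simp [mutY, Fin.prod_univ_three] <;> field_simp

theorem prod_mutYWord {y : Fin 3 → F} (hy : ∀ j, y j ≠ 0) (w : List (Fin 3)) :
    ∏ j, mutYWord w y j = ∏ j, y j := by
  induction w generalizing y with
  | nil => rfl
  | cons k w ih => exact (ih (mutY_ne_zero hy k)).trans (prod_mutY hy k)

theorem mutYWord_123_pow {y : Fin 3 → F} (hy : ∀ j, y j ≠ 0) (t : ℕ) :
    mutYWord (List.replicate (2 * t) ([0, 1, 2] : List (Fin 3))).flatten y =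
      ![y 0 * (∏ j, y j) ^ (3 * t), y 1, y 2 / (∏ j, y j) ^ (3 * t)] := by
  induction t with
  | zero => funext j; fin_cases j <;> simp [mutYWord]
  | succ t ih =>
    rw [Nat.mul_succ, List.replicate_add, List.flatten_append, mutYWord_append,
      show (List.replicate 2 ([0, 1, 2] : List (Fin 3))).flatten = [0, 1, 2, 0, 1, 2] from rfl,
      mutYWord_123_123 (mutYWord_ne_zero hy _), prod_mutYWord hy, ih]
    funext j; fin_cases j <;> simp [mul_add, pow_add, mul_assoc, div_div]

theorem mutYWord_213_pow {y : Fin 3 → F} (hy : ∀ j, y j ≠ 0) (s : ℕ) :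
    mutYWord (List.replicate (2 * s) ([1, 0, 2] : List (Fin 3))).flatten y =
      ![y 0, y 1 * (∏ j, y j) ^ (3 * s), y 2 / (∏ j, y j) ^ (3 * s)] := by
  induction s with
  | zero => funext j; fin_cases j <;> simp [mutYWord]
  | succ s ih =>
    rw [Nat.mul_succ, List.replicate_add, List.flatten_append, mutYWord_append,
      show (List.replicate 2 ([1, 0, 2] : List (Fin 3))).flatten = [1, 0, 2, 1, 0, 2] from rfl,
      mutYWord_213_213 (mutYWord_ne_zero hy _), prod_mutYWord hy, ih]
    funext j; fin_cases j <;> simp [mul_add, pow_add, mul_assoc, div_div]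

end YPattern

def ySeed (v : Fin 6 → K) : Fin 3 → K :=
  ![(v 2 * v 4 + v 3 * v 5) / (v 0 * v 1), (v 1 * v 4 + v 0 * v 5) / (v 2 * v 3),
    (v 0 * v 2 + v 1 * v 3) / (v 4 * v 5)]

def Nondegenerate (v : Fin 6 → K) : Prop :=
  (∀ i, v i ≠ 0) ∧ ∀ k, ySeed v k ≠ 0

theorem ySeed_tau {v : Fin 6 → K} (hv : ∀ i, v i ≠ 0) (k : Fin 3) :
    ySeed (tau k v) = mutY k (ySeed v) := by
  have := hv 0; have := hv 1; have := hv 2; have := hv 3; have := hv 4; have := hv 5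
  fin_cases k <;> funext j <;> fin_cases j <;>
    simp [ySeed, mutY, tau, tau1, tau2, tau3] <;> field_simp

theorem Nondegenerate.tau {v : Fin 6 → K} (hv : Nondegenerate v) (k : Fin 3) :
    Nondegenerate (tau k v) := by
  obtain ⟨hv, hy⟩ := hv
  refine ⟨?_, by rw [ySeed_tau hv]; exact mutY_ne_zero hy k⟩
  have := hy k
  fin_cases k <;> intro i <;> fin_cases i <;> simp_all [ySeed, _root_.tau, tau1, tau2, tau3]

theorem Nondegenerate.applyWord {v : Fin 6 → K} (hv : Nondegenerate v) (w : List (Fin 3)) :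
    Nondegenerate (applyWord w v) := by
  induction w generalizing v with
  | nil => exact hv
  | cons k w ih => exact ih (hv.tau k)

theorem ySeed_applyWord {v : Fin 6 → K} (hv : Nondegenerate v) (w : List (Fin 3)) :
    ySeed (applyWord w v) = mutYWord w (ySeed v) := by
  induction w generalizing v with
  | nil => rfl
  | cons k w ih =>
    rw [applyWord, List.foldl_cons, ← applyWord, ih (hv.tau k), ySeed_tau hv.1]
    rfl

open MvPolynomial in
theorem algebraMap_ne_zero_of_eval_ne_zero {q : P} (a : Fin 6 → ℚ) (h : eval a q ≠ 0) :
    algebraMap P K q ≠ 0 := by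
  rw [ne_eq, IsFractionRing.to_map_eq_zero_iff]
  rintro rfl
  simp at h

theorem x_ne_zero (i : Fin 6) : x i ≠ 0 :=
  algebraMap_ne_zero_of_eval_ne_zero 1 (by simp)

theorem ySeed_X0 : ySeed X0 = ![A, B, C] := rfl

theorem nondegenerate_X0 : Nondegenerate X0 := by
  refine ⟨x_ne_zero, fun k => ?_⟩
  fin_cases k <;> simp [ySeed_X0, A, B, C, x_ne_zero]
  all_goals
    simp only [x, ← map_mul, ← map_add]
    exact algebraMap_ne_zero_of_eval_ne_zero 1 (by simp)

open MvPolynomial in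
theorem A_mul_B_mul_C_pow_ne_one {n : ℕ} (hn : n ≠ 0) : (A * B * C) ^ n ≠ 1 := by
  set N : P := (X 2 * X 4 + X 3 * X 5) * (X 1 * X 4 + X 0 * X 5) * (X 0 * X 2 + X 1 * X 3)
  set D : P := X 0 * X 1 * (X 2 * X 3) * (X 4 * X 5)
  have hprod : A * B * C = algebraMap P K N / algebraMap P K D := by
    simp only [A, B, _root_.C, div_mul_div_comm]
    simp [N, D, x]
  have hD : algebraMap P K D ≠ 0 := algebraMap_ne_zero_of_eval_ne_zero 1 (by simp [D])
  intro h
  rw [hprod, div_pow, div_eq_one_iff_eq (pow_ne_zero _ hD), ← map_pow, ← map_pow] at h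
  have := congrArg (eval 1) (IsFractionRing.injective P K h)
  simp [N, D] at this
  norm_num [pow_eq_one_iff_of_nonneg, hn] at this

theorem ySeed_applyWord_word17 (s t : ℕ) :
    ySeed (applyWord (word17 s t) X0) =
      ![A * (A * B * C) ^ (3 * t), B * (A * B * C) ^ (3 * s),
        C / (A * B * C) ^ (3 * t) / (A * B * C) ^ (3 * s)] := by
  have hy : ∀ j, ySeed X0 j ≠ 0 := nondegenerate_X0.2
  have hprod : ∏ j, ySeed X0 j = A * B * C := by simp [Fin.prod_univ_three, ySeed_X0]
  rw [ySeed_applyWord nondegenerate_X0, word17, mutYWord_append,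
    mutYWord_213_pow (mutYWord_ne_zero hy _), prod_mutYWord hy, mutYWord_123_pow hy, hprod]
  simp [ySeed_X0]

/-- Remark 2.3: distinct even alcoves of the northeast cone carry distinct
labeled seeds; in particular the seed at any even alcove (3s, 3t) ≠ (0, 0)
differs from the initial seed. -/
theorem seed_nontrivial (s t : ℕ) (h : (s, t) ≠ (0, 0)) :
    applyWord (word17 s t) X0 ≠ X0 := by
  intro hfix
  have hseed := ySeed_applyWord_word17 s t
  rw [hfix, ySeed_X0] at hseed
  have hA : A ≠ 0 := by simpa [ySeed_X0] using nondegenerate_X0.2 0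
  have hB : B ≠ 0 := by simpa [ySeed_X0] using nondegenerate_X0.2 1
  have ht : (A * B * C) ^ (3 * t) = 1 := by
    simpa [hA] using congrFun hseed 0
  have hs : (A * B * C) ^ (3 * s) = 1 := by
    simpa [hB] using congrFun hseed 1
  have ht0 : t = 0 := by_contra fun ht0 => A_mul_B_mul_C_pow_ne_one (by omega) ht
  have hs0 : s = 0 := by_contra fun hs0 => A_mul_B_mul_C_pow_ne_one (by omega) hs
  exact h (by rw [hs0, ht0])
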